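/- Let G be a finite group generated by two subnormal supersoluble subgroups A and B. If the derived subgroup G' of G is nilpotent, then G is supersoluble. -/

import Mathlib

/-- A subgroup `H` of `G` is subnormal if there is a chain
`H = c 0 ≤ c 1 ≤ ... ≤ c n = G` with each term normal in the next. -/
def Subgroup.IsSubnormalChain {G : Type*} [Group G] (H : Subgroup G) : Prop :=
  ∃ (n : ℕ) (c : Fin (n + 1) → Subgroup G),
    c 0 = H ∧ c (Fin.last n) = ⊤ ∧
    ∀ i : Fin n, c i.castSucc ≤ c i.succ ∧
      ((c i.castSucc).subgroupOf (c i.succ)).Normal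

/-- A group is supersoluble if it has a normal series (all terms normal in `G`)
with cyclic factors; the factor `c (i+1) / c i` being cyclic is expressed as
`c (i+1)` being generated by `c i` together with a single element. -/
def IsSupersolvable (G : Type*) [Group G] : Prop :=
  ∃ (n : ℕ) (c : Fin (n + 1) → Subgroup G),
    c 0 = ⊥ ∧ c (Fin.last n) = ⊤ ∧
    (∀ i, (c i).Normal) ∧
    ∀ i : Fin n, c i.castSucc ≤ c i.succ ∧
      ∃ g ∈ c i.succ, c i.succ ≤ c i.castSucc ⊔ Subgroup.zpowers g

/-- The Fitting subgroup: the join of all normal nilpotent subgroups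
(in a finite group, the largest normal nilpotent subgroup). -/
def fittingSubgroup (G : Type*) [Group G] : Subgroup G :=
  sSup {N : Subgroup G | N.Normal ∧ Group.IsNilpotent N}

instance fittingSubgroup_normal (G : Type*) [Group G] : (fittingSubgroup G).Normal := by
  constructor
  intro x hx g
  rw [fittingSubgroup, sSup_eq_iSup'] at hx ⊢
  refine Subgroup.iSup_induction
    (C := fun y => g * y * g⁻¹ ∈
      ⨆ (N : {N : Subgroup G // N.Normal ∧ Group.IsNilpotent N}), (N : Subgroup G))
    _ hx (fun N y hy => ?_) (by simpa using Subgroup.one_mem _) (fun y z hy hz => ?_)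
  · exact Subgroup.mem_iSup_of_mem N (N.2.1.conj_mem y hy g)
  · simpa [mul_assoc] using Subgroup.mul_mem _ hy hz

/-- `O_p(G)`: the join of all normal `p`-subgroups
(in a finite group, the largest normal `p`-subgroup). -/
def pCore (p : ℕ) (G : Type*) [Group G] : Subgroup G :=
  sSup {N : Subgroup G | N.Normal ∧ IsPGroup p N}

instance pCore_normal (p : ℕ) (G : Type*) [Group G] : (pCore p G).Normal := by
  constructor
  intro x hx g
  rw [pCore, sSup_eq_iSup'] at hx ⊢
  refine Subgroup.iSup_induction
    (C := fun y => g * y * g⁻¹ ∈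
      ⨆ (N : {N : Subgroup G // N.Normal ∧ IsPGroup p N}), (N : Subgroup G))
    _ hx (fun N y hy => ?_) (by simpa using Subgroup.one_mem _) (fun y z hy hz => ?_)
  · exact Subgroup.mem_iSup_of_mem N (N.2.1.conj_mem y hy g)
  · simpa [mul_assoc] using Subgroup.mul_mem _ hy hz

/-- `G` has a Sylow tower of supersoluble type: a normal series `⊥ = c 0 ≤ ... ≤ c n = ⊤`
(all terms normal in `G`) together with strictly decreasing primes `p 0 > p 1 > ... `
exhausting the primes dividing `|G|`, such that each factor `c (i+1) / c i` is a
Sylow `p i`-subgroup of `G / c i` (i.e. has order the full `p i`-part of `|G|`). -/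
def HasSupersolubleSylowTower (G : Type*) [Group G] : Prop :=
  ∃ (n : ℕ) (c : Fin (n + 1) → Subgroup G) (p : Fin n → ℕ),
    c 0 = ⊥ ∧ c (Fin.last n) = ⊤ ∧
    (∀ i, (c i).Normal) ∧
    (∀ i : Fin n, c i.castSucc ≤ c i.succ) ∧
    (∀ i, (p i).Prime) ∧
    (∀ i j : Fin n, i < j → p j < p i) ∧
    (∀ q : ℕ, q.Prime → q ∣ Nat.card G → ∃ i, p i = q) ∧
    (∀ i : Fin n,
      Nat.card (c i.succ) = Nat.card (c i.castSucc) * p i ^ (Nat.card G).factorization (p i))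

/-!
Induct on `|G|` and let `N` be a minimal normal subgroup. As `G'` is nilpotent, `N` is abelian and
centralized by `G'`: either `N ∩ G' = 1` and `N` is central, or `N ≤ G'` and `N` meets `Z(G')`.
So `G` acts on `N` through an abelian group, and the elements of `N` on which a fixed `g` acts as
a power map `w ↦ w ^ k` form a normal subgroup of `G`; by minimality, `g` acts on all of `N` as a
power map as soon as it does so on one nontrivial element. Both `A` and `B` have such an element:
if `N ∩ A = 1`, subnormality gives `[N, A, …, A] = 1`, so `A` centralizes a nontrivial element
of `N`; otherwise the supersoluble group `A` has a nontrivial cyclic normal subgroup inside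
`N ∩ A`. Hence `G = ⟨A, B⟩` normalizes every cyclic subgroup of `N`, so `N` is cyclic, and `G/N`
is supersoluble by induction.
-/

open Subgroup
open scoped commutatorElement

theorem Fin.exists_not_castSucc_and_succ {n : ℕ} {p : Fin (n + 1) → Prop} (h0 : ¬ p 0)
    (hn : p (Fin.last n)) : ∃ i : Fin n, ¬ p i.castSucc ∧ p i.succ := by
  obtain ⟨k, hk, hk1, hpk⟩ := Nat.exists_not_and_succ_of_not_zero_of_exists
    (p := fun k => ∃ h : k < n + 1, p ⟨k, h⟩) (by simpa using h0) ⟨n, n.lt_succ_self, hn⟩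
  exact ⟨⟨k, by omega⟩, fun h => hk ⟨_, h⟩, hpk⟩

theorem Subgroup.isCyclic_of_inf_eq_bot_of_le_sup_zpowers {G : Type*} [Group G]
    {C Y : Subgroup G} [C.Normal] {g : G} (hYC : Y ⊓ C = ⊥) (hY : Y ≤ C ⊔ zpowers g) :
    IsCyclic Y := by
  let f := (QuotientGroup.mk' C).comp Y.subtype
  have hf : Function.Injective f := by
    rw [injective_iff_map_eq_one]
    intro y hy
    have hyC : (y : G) ∈ Y ⊓ C := ⟨y.2, (QuotientGroup.eq_one_iff _).mp hy⟩
    exact Subtype.ext (mem_bot.mp (hYC ▸ hyC))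
  have hrange : f.range ≤ zpowers (QuotientGroup.mk' C g) := by
    rw [MonoidHom.range_comp, range_subtype]
    calc map _ Y ≤ map _ (C ⊔ zpowers g) := map_mono hY
      _ = zpowers _ := by
        rw [Subgroup.map_sup, MonoidHom.map_zpowers, QuotientGroup.map_mk'_self, bot_sup_eq]
  have := isCyclic_of_le hrange
  exact isCyclic_of_injective f.rangeRestrict (f.rangeRestrict_injective_iff.mpr hf)

namespace IsSupersolvable

theorem of_subsingleton (G : Type*) [Group G] [Subsingleton G] : IsSupersolvable G :=
  ⟨0, fun _ => ⊥, rfl, Subsingleton.elim _ _, fun _ => normal_bot, fun i => i.elim0⟩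

theorem of_surjective {G Q : Type*} [Group G] [Group Q] (h : IsSupersolvable G) (f : G →* Q)
    (hf : Function.Surjective f) : IsSupersolvable Q := by
  obtain ⟨n, c, h0, hl, hnorm, hs⟩ := h
  refine ⟨n, fun i => (c i).map f, by simp [h0], by simp [hl, map_top_of_surjective f hf],
    fun i => (hnorm i).map f hf, fun i => ?_⟩
  obtain ⟨hle, g, hg, hcyc⟩ := hs i
  refine ⟨map_mono hle, f g, mem_map_of_mem f hg, ?_⟩
  rw [← MonoidHom.map_zpowers, ← Subgroup.map_sup]
  exact map_mono hcyc

theorem of_quotient_zpowers {G : Type*} [Group G] {w : G} [(zpowers w).Normal]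
    (h : IsSupersolvable (G ⧸ zpowers w)) : IsSupersolvable G := by
  obtain ⟨n, c, h0, hl, hnorm, hs⟩ := h
  let π := QuotientGroup.mk' (zpowers w)
  have hπ : Function.Surjective π := QuotientGroup.mk'_surjective _
  refine ⟨n + 1, Fin.cons ⊥ fun i => (c i).comap π, rfl, ?_, ?_, ?_⟩
  · rw [← Fin.succ_last, Fin.cons_succ, hl, comap_top]
  · exact Fin.cases normal_bot fun i => (hnorm i).comap π
  · refine Fin.cases ?_ fun i => ?_
    · refine ⟨bot_le, w, ?_, ?_⟩
      all_goals simp [h0, π]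
    · obtain ⟨hle, g, hg, hcyc⟩ := hs i
      obtain ⟨g, rfl⟩ := hπ g
      simp only [← Fin.succ_castSucc, Fin.cons_succ]
      refine ⟨comap_mono hle, g, hg, ?_⟩
      calc comap π (c i.succ) ≤ comap π (c i.castSucc ⊔ zpowers (π g)) := comap_mono hcyc
        _ = comap π (map π (comap π (c i.castSucc) ⊔ zpowers g)) := by
          rw [Subgroup.map_sup, map_comap_eq_self_of_surjective hπ, MonoidHom.map_zpowers]
        _ = comap π (c i.castSucc) ⊔ zpowers g := by
          rw [comap_map_eq, sup_eq_left]
          exact le_sup_of_le_left (π.ker_le_comap _)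

theorem exists_zpowers_normal {G : Type*} [Group G] (h : IsSupersolvable G) {M : Subgroup G}
    [M.Normal] (hM : M ≠ ⊥) : ∃ x ∈ M, x ≠ 1 ∧ (zpowers x).Normal := by
  obtain ⟨n, c, h0, hl, hnorm, hs⟩ := h
  obtain ⟨i, hi, hi1⟩ := Fin.exists_not_castSucc_and_succ (p := fun i => M ⊓ c i ≠ ⊥)
    (by simp [h0]) (by simpa [hl])
  push Not at hi
  obtain ⟨-, g, -, hcyc⟩ := hs i
  have := hnorm i.castSucc
  have := hnorm i.succ
  have hcyc' : IsCyclic ↥(M ⊓ c i.succ) := isCyclic_of_inf_eq_bot_of_le_sup_zpowers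
    (eq_bot_iff.mpr (hi ▸ le_inf (inf_le_left.trans inf_le_left) inf_le_right))
    (inf_le_right.trans hcyc)
  obtain ⟨x, hx⟩ := (Subgroup.isCyclic_iff_exists_zpowers_eq_top _).mp hcyc'
  refine ⟨x, (hx ▸ mem_zpowers x : x ∈ M ⊓ c i.succ).1, fun h1 => hi1 ?_, hx ▸ inferInstance⟩
  rw [← hx, h1, zpowers_one_eq_bot]

end IsSupersolvable

namespace Subgroup

variable {G : Type*} [Group G]

theorem IsSubnormalChain.isSubnormal {H : Subgroup G} (hH : H.IsSubnormalChain) :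
    H.IsSubnormal := by
  obtain ⟨n, c, rfl, hlast, hstep⟩ := hH
  induction n with
  | zero => exact hlast ▸ .top
  | succ n ih =>
    exact .step _ _ (hstep 0).1 (ih (fun i => c i.succ) hlast fun i => hstep i.succ) (hstep 0).2

theorem IsSubnormal.exists_iterate_commutator_le {H : Subgroup G} (hH : H.IsSubnormal)
    (L : Subgroup G) : ∃ d, (fun X => ⁅X, H⁆)^[d] L ≤ H := by
  induction hH with
  | top => exact ⟨0, le_top⟩
  | step H K hHK _ hHK' ih =>
    obtain ⟨d, hd⟩ := ih
    refine ⟨d + 1, ?_⟩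
    have hle : (fun X => ⁅X, H⁆)^[d] L ≤ (fun X => ⁅X, K⁆)^[d] L :=
      Monotone.iterate_le_of_le (fun _ _ h => commutator_mono h le_rfl)
        (fun _ => commutator_mono le_rfl hHK) d L
    rw [Function.iterate_succ_apply']
    refine (commutator_mono (hle.trans hd) le_rfl).trans ?_
    rw [commutator_le]
    intro k hk h hh
    exact mul_mem ((normal_subgroupOf_iff hHK).mp hHK' h k hh hk) (inv_mem hh)

theorem IsSubnormal.inf_centralizer_ne_bot {H N : Subgroup G} (hH : H.IsSubnormal) [N.Normal]
    (hN : N ≠ ⊥) (hNH : N ⊓ H = ⊥) : N ⊓ centralizer H ≠ ⊥ := by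
  set T : ℕ → Subgroup G := fun k => (fun X => ⁅X, H⁆)^[k] N
  have hTsucc (k : ℕ) : T (k + 1) = ⁅T k, H⁆ := Function.iterate_succ_apply' _ _ _
  have hTN (k : ℕ) : T k ≤ N := by
    induction k with
    | zero => exact le_rfl
    | succ k ih => exact hTsucc k ▸ (commutator_mono ih le_rfl).trans (commutator_le_left _ _)
  obtain ⟨d, hd⟩ := hH.exists_iterate_commutator_le N
  obtain ⟨k, hk, hk1⟩ := Nat.exists_not_and_succ_of_not_zero_of_exists (p := fun k => T k = ⊥)
    hN ⟨d, eq_bot_iff.mpr (hNH ▸ le_inf (hTN d) hd)⟩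
  have hcent : T k ≤ centralizer H := commutator_eq_bot_iff_le_centralizer.mp (hTsucc k ▸ hk1)
  exact ne_bot_of_le_ne_bot hk (le_inf (hTN k) hcent)

theorem inf_center_ne_bot_of_isNilpotent [Group.IsNilpotent G] {N : Subgroup G} [N.Normal]
    (hN : N ≠ ⊥) : N ⊓ center G ≠ ⊥ := by
  obtain ⟨n, hn⟩ := Group.IsNilpotent.nilpotent (G := G)
  obtain ⟨k, hk, hk1⟩ := Nat.exists_not_and_succ_of_not_zero_of_exists
    (p := fun k => N ⊓ upperCentralSeries G k ≠ ⊥) (by simp [upperCentralSeries_zero])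
    ⟨n, by simpa [hn]⟩
  push Not at hk
  refine ne_bot_of_le_ne_bot hk1 (le_inf inf_le_left ?_)
  rw [← centralizer_univ, ← coe_top, ← commutator_eq_bot_iff_le_centralizer, eq_bot_iff, ← hk]
  exact le_inf ((commutator_mono inf_le_left le_rfl).trans (commutator_le_left _ _))
    ((commutator_mono inf_le_right le_rfl).trans (commutator_upperCentralSeries_top_le G k))

theorem IsSubnormal.exists_conj_mem_zpowers {H N : Subgroup G} (hH : H.IsSubnormal)
    (hHs : IsSupersolvable H) [N.Normal] (hN : N ≠ ⊥) :
    ∃ x ∈ N, x ≠ 1 ∧ ∀ h ∈ H, h * x * h⁻¹ ∈ zpowers x := by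
  rcases eq_or_ne (N ⊓ H) ⊥ with hNH | hNH
  · obtain ⟨x, hx, hx1⟩ :=
      (N ⊓ centralizer H).bot_or_exists_ne_one.resolve_left (hH.inf_centralizer_ne_bot hN hNH)
    refine ⟨x, hx.1, hx1, fun h hh => ?_⟩
    rw [mem_centralizer_iff.mp hx.2 h hh, mul_inv_cancel_right]
    exact mem_zpowers x
  · have hM : N.subgroupOf H ≠ ⊥ := by rwa [Ne, subgroupOf_eq_bot, disjoint_iff]
    obtain ⟨x, hx, hx1, hxH⟩ := hHs.exists_zpowers_normal hM
    refine ⟨x, hx, by exact_mod_cast hx1, fun h hh => ?_⟩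
    exact MonoidHom.map_zpowers H.subtype x ▸
      mem_map_of_mem H.subtype (hxH.conj_mem x (mem_zpowers x) ⟨h, hh⟩)

def IsMinimalNormal (N : Subgroup G) : Prop :=
  Minimal (fun K : Subgroup G => K.Normal ∧ K ≠ ⊥) N

variable (G) in
theorem exists_isMinimalNormal [Finite G] [Nontrivial G] :
    ∃ N : Subgroup G, N.IsMinimalNormal :=
  exists_minimal_of_wellFoundedLT _ ⟨⊤, inferInstance, top_ne_bot⟩

namespace IsMinimalNormal

variable {N : Subgroup G}

theorem normal (hN : N.IsMinimalNormal) : N.Normal := hN.prop.1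

theorem ne_bot (hN : N.IsMinimalNormal) : N ≠ ⊥ := hN.prop.2

theorem eq_of_le (hN : N.IsMinimalNormal) {K : Subgroup G} [K.Normal] (hK : K ≠ ⊥) (hKN : K ≤ N) :
    K = N :=
  hKN.antisymm (hN.le_of_le ⟨‹_›, hK⟩ hKN)

theorem le_centralizer_of_isNilpotent (hN : N.IsMinimalNormal) {K : Subgroup G} [K.Normal]
    [Group.IsNilpotent K] (hNK : N ≤ K) : K ≤ centralizer N := by
  have := hN.normal
  have hNK' : N.subgroupOf K ≠ ⊥ := by
    rw [Ne, subgroupOf_eq_bot, disjoint_of_le_iff_left_eq_bot hNK]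
    exact hN.ne_bot
  obtain ⟨x, ⟨hxN, hxZ⟩, hx1⟩ := (N.subgroupOf K ⊓ center K).bot_or_exists_ne_one.resolve_left
    (inf_center_ne_bot_of_isNilpotent hNK')
  have hxC : (x : G) ∈ N ⊓ centralizer K := by
    refine ⟨hxN, mem_centralizer_iff.mpr fun y hy => ?_⟩
    exact congrArg Subtype.val (mem_center_iff.mp hxZ ⟨y, hy⟩)
  have hC : N ⊓ centralizer K = N :=
    hN.eq_of_le (ne_bot_of_le_ne_bot (zpowers_ne_bot.mpr (by exact_mod_cast hx1))
      (zpowers_le.mpr hxC)) inf_le_left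
  exact le_centralizer_iff.mp (hC ▸ inf_le_right)

theorem commutator_le_centralizer (hN : N.IsMinimalNormal)
    [Group.IsNilpotent (_root_.commutator G)] :
    _root_.commutator G ≤ centralizer N ∧ N ≤ centralizer N := by
  have := hN.normal
  rcases eq_or_ne (N ⊓ _root_.commutator G) ⊥ with h | h
  · have hNZ : N ≤ center G := by
      rw [← centralizer_univ, ← coe_top, ← commutator_eq_bot_iff_le_centralizer, eq_bot_iff, ← h]
      exact le_inf (commutator_le_left _ _)
        (_root_.commutator_def G ▸ commutator_mono le_top le_rfl)
    exact ⟨le_centralizer_iff.mp (hNZ.trans (center_le_centralizer _)),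
      hNZ.trans (center_le_centralizer _)⟩
  · have hNG' : N ≤ _root_.commutator G := hN.eq_of_le h inf_le_left ▸ inf_le_right
    have hG'N := hN.le_centralizer_of_isNilpotent hNG'
    exact ⟨hG'N, hNG'.trans hG'N⟩

theorem conj_eq_zpow (hN : N.IsMinimalNormal) (hab : N ≤ centralizer N)
    (hcent : _root_.commutator G ≤ centralizer N) {g x : G} {k : ℤ} (hx : x ∈ N) (hx1 : x ≠ 1)
    (hgx : g * x * g⁻¹ = x ^ k) {w : G} (hw : w ∈ N) : g * w * g⁻¹ = w ^ k := by
  have := hN.normal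
  let W : Subgroup G :=
    { carrier := {w | w ∈ N ∧ g * w * g⁻¹ = w ^ k}
      one_mem' := ⟨N.one_mem, by simp⟩
      mul_mem' := by
        rintro a b ⟨haN, ha⟩ ⟨hbN, hb⟩
        refine ⟨N.mul_mem haN hbN, ?_⟩
        have hab : Commute a b := mem_centralizer_iff.mp (hab hbN) a haN
        calc g * (a * b) * g⁻¹ = (g * a * g⁻¹) * (g * b * g⁻¹) := by group
          _ = (a * b) ^ k := by rw [ha, hb, hab.mul_zpow]
      inv_mem' := by
        rintro a ⟨haN, ha⟩
        refine ⟨N.inv_mem haN, ?_⟩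
        calc g * a⁻¹ * g⁻¹ = (g * a * g⁻¹)⁻¹ := by group
          _ = a⁻¹ ^ k := by rw [ha, inv_zpow] }
  have hW : W.Normal := by
    refine ⟨fun a ⟨haN, ha⟩ y => ⟨this.conj_mem a haN y, ?_⟩⟩
    have hc : a ^ k * ⁅y⁻¹, g⁆ = ⁅y⁻¹, g⁆ * a ^ k :=
      mem_centralizer_iff.mp (hcent (_root_.commutator_def G ▸
        commutator_mem_commutator (mem_top y⁻¹) (mem_top g))) (a ^ k) (N.zpow_mem haN k)
    calc g * (y * a * y⁻¹) * g⁻¹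
        = y * ⁅y⁻¹, g⁆ * (g * a * g⁻¹) * ⁅y⁻¹, g⁆⁻¹ * y⁻¹ := by
          simp only [commutatorElement_def]; group
      _ = y * a ^ k * y⁻¹ := by rw [ha, mul_assoc y, ← hc]; group
      _ = (y * a * y⁻¹) ^ k := conj_zpow.symm
  have hWN : W = N := hN.eq_of_le (K := W)
    (ne_bot_of_le_ne_bot (zpowers_ne_bot.mpr hx1) (zpowers_le.mpr ⟨hx, hgx⟩)) fun _ h => h.1
  exact (hWN ▸ hw : w ∈ W).2

theorem mem_normalizer_zpowers [Finite G] (hN : N.IsMinimalNormal) (hab : N ≤ centralizer N)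
    (hcent : _root_.commutator G ≤ centralizer N) {g x : G} (hx : x ∈ N) (hx1 : x ≠ 1)
    (hgx : g * x * g⁻¹ ∈ zpowers x) {w : G} (hw : w ∈ N) :
    g ∈ normalizer (zpowers w : Set G) := by
  obtain ⟨k, hk⟩ := mem_zpowers_iff.mp hgx
  have hgw := hN.conj_eq_zpow hab hcent hx hx1 hk.symm hw
  refine mem_normalizer_fintype fun _ ⟨s, hs⟩ => ⟨k * s, ?_⟩
  simp only [← hs, ← conj_zpow, hgw, zpow_mul]

theorem le_normalizer_zpowers [Finite G] (hN : N.IsMinimalNormal) (hab : N ≤ centralizer N)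
    (hcent : _root_.commutator G ≤ centralizer N) {H : Subgroup G} (hH : H.IsSubnormal)
    (hHs : IsSupersolvable H) {w : G} (hw : w ∈ N) : H ≤ normalizer (zpowers w : Set G) := by
  have := hN.normal
  obtain ⟨x, hx, hx1, hxH⟩ := hH.exists_conj_mem_zpowers hHs hN.ne_bot
  exact fun h hh => hN.mem_normalizer_zpowers hab hcent hx hx1 (hxH h hh) hw

theorem exists_eq_zpowers [Finite G] [Group.IsNilpotent (_root_.commutator G)]
    (hN : N.IsMinimalNormal) {A B : Subgroup G} (hA : A.IsSubnormal) (hB : B.IsSubnormal)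
    (hAs : IsSupersolvable A) (hBs : IsSupersolvable B) (hAB : A ⊔ B = ⊤) :
    ∃ w, N = zpowers w := by
  obtain ⟨hcent, hab⟩ := hN.commutator_le_centralizer
  obtain ⟨w, hw, hw1⟩ := N.bot_or_exists_ne_one.resolve_left hN.ne_bot
  have : (zpowers w).Normal := by
    rw [← normalizer_eq_top_iff, eq_top_iff, ← hAB]
    exact sup_le (hN.le_normalizer_zpowers hab hcent hA hAs hw)
      (hN.le_normalizer_zpowers hab hcent hB hBs hw)
  exact ⟨w, (hN.eq_of_le (zpowers_ne_bot.mpr hw1) (zpowers_le.mpr hw)).symm⟩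

end IsMinimalNormal

end Subgroup

theorem isSupersolvable_of_sup_eq_top {G : Type*} [hG : Group G] [Finite G] {A B : Subgroup G}
    (hA : A.IsSubnormal) (hB : B.IsSubnormal) (hAs : IsSupersolvable A)
    (hBs : IsSupersolvable B) (hAB : A ⊔ B = ⊤) (hG' : Group.IsNilpotent (commutator G)) :
    IsSupersolvable G := by
  induction G using Finite.induction_subsingleton_or_nontrivial generalizing hG with
  | hbase G => exact .of_subsingleton G
  | hstep G ih =>
    obtain ⟨N, hN⟩ := exists_isMinimalNormal G
    obtain ⟨w, rfl⟩ := hN.exists_eq_zpowers hA hB hAs hBs hAB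
    have := hN.normal
    let π := QuotientGroup.mk' (zpowers w)
    have hπ : Function.Surjective π := QuotientGroup.mk'_surjective _
    have hcard : Nat.card (G ⧸ zpowers w) < Nat.card G := by
      rw [card_eq_card_quotient_mul_card_subgroup (zpowers w)]
      exact lt_mul_of_one_lt_right Nat.card_pos ((one_lt_card_iff_ne_bot _).mpr hN.ne_bot)
    have hQ' : Group.IsNilpotent (commutator (G ⧸ zpowers w)) := by
      rw [commutator_def, ← map_top_of_surjective π hπ, ← map_commutator, ← commutator_def]
      exact Group.nilpotent_of_surjective _ (π.subgroupMap_surjective _)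
    refine .of_quotient_zpowers (ih _ hcard (hA.map hπ) (hB.map hπ)
      (hAs.of_surjective _ (π.subgroupMap_surjective A))
      (hBs.of_surjective _ (π.subgroupMap_surjective B)) ?_ hQ')
    rw [← Subgroup.map_sup, hAB, map_top_of_surjective π hπ]

/-- If a finite group generated by two subnormal supersoluble subgroups has
nilpotent derived subgroup, then it is supersoluble. -/
theorem stmt_2 {G : Type*} [Group G] [Finite G] (A B : Subgroup G)
    (hA : A.IsSubnormalChain) (hB : B.IsSubnormalChain)
    (hAs : IsSupersolvable A) (hBs : IsSupersolvable B)
    (hgen : A ⊔ B = ⊤) (hG' : Group.IsNilpotent (commutator G)) :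
    IsSupersolvable G :=
  isSupersolvable_of_sup_eq_top hA.isSubnormal hB.isSubnormal hAs hBs hgen hG'
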